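/- arXiv:1507.06400 — 2 statements merged into one kernel-verified Lean document; each statement's English description precedes it below -/
import Mathlib

section
/- For all parameters α > 0, λ > 0, c > 0, β > 0 and every natural number r, the r-th moment of the OGE-G distribution is finite, i.e., the integral ∫₀^∞ x^r · f(x; α, λ, c, β) dx converges. -/
/-!
Write `v` for the odds of the Gompertz cdf and `g_α(v) = αβ e^{-αv} (1 - e^{-αv})^{β-1}` for
the generalized exponential density, the derivative of `(1 - e^{-αv})^β`. The OGE-G density is
`v' · g_α(v)`, so `v' · g_{α/2}(v)` is integrable on `(0, ∞)` as the nonnegative derivative of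
a bounded increasing function. Since `1 - e^{-αv} = (1 - e^{-αv/2}) (1 + e^{-αv/2})`, we have
`g_α(v) ≤ C e^{-αv/2} g_{α/2}(v)`, and `x^r e^{-αv/2}` is bounded because `v(x) ≥ λx`.
Hence `x^r` times the OGE-G density is dominated by a multiple of `v' · g_{α/2}(v)`.
-/

open MeasureTheory Real Set Filter Topology
open scoped Nat

/-- The probability density function of the OGE-G distribution. -/
noncomputable def ogeG_pdf (α lam c β x : ℝ) : ℝ :=
  α * β * lam * Real.exp (c * x) * Real.exp (lam / c * (Real.exp (c * x) - 1)) *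
    Real.exp (-α * (Real.exp (lam / c * (Real.exp (c * x) - 1)) - 1)) *
    (1 - Real.exp (-α * (Real.exp (lam / c * (Real.exp (c * x) - 1)) - 1))) ^ (β - 1)

noncomputable def geDensity (α β v : ℝ) : ℝ :=
  α * β * exp (-α * v) * (1 - exp (-α * v)) ^ (β - 1)

noncomputable def geCDF (α β v : ℝ) : ℝ :=
  (1 - exp (-α * v)) ^ β

section GeneralizedExponential

variable {α β : ℝ}

lemma geDensity_nonneg (hα : 0 ≤ α) (hβ : 0 ≤ β) {v : ℝ} (hv : 0 ≤ v) :
    0 ≤ geDensity α β v :=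
  mul_nonneg (by positivity) (rpow_nonneg (sub_nonneg.2 (exp_le_one_iff.2 (by nlinarith))) _)

lemma hasDerivAt_geCDF (hα : 0 < α) {v : ℝ} (hv : 0 < v) :
    HasDerivAt (geCDF α β) (geDensity α β v) v := by
  have hbase : 1 - exp (-α * v) ≠ 0 :=
    (sub_pos.2 (exp_lt_one_iff.2 (by nlinarith))).ne'
  refine ((((hasDerivAt_id v).const_mul (-α)).exp.const_sub 1).rpow_const
    (Or.inl hbase)).congr_deriv ?_
  simp only [geDensity, id]
  ring

lemma continuous_geCDF (hβ : 0 ≤ β) : Continuous (geCDF α β) :=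
  continuous_iff_continuousAt.2 fun _ =>
    (continuousAt_rpow_const _ _ (Or.inr hβ)).comp (by fun_prop)

lemma tendsto_geCDF_atTop (hα : 0 < α) :
    Tendsto (geCDF α β) atTop (𝓝 1) := by
  have h : Tendsto (fun v => 1 - exp (-α * v)) atTop (𝓝 1) := by
    simpa using tendsto_const_nhds.sub
      (tendsto_exp_atBot.comp (tendsto_id.const_mul_atTop_of_neg (neg_neg_of_pos hα)))
  have hpow : Tendsto (fun u : ℝ => u ^ β) (𝓝 1) (𝓝 1) := by
    simpa using (continuousAt_rpow_const 1 β (Or.inl one_ne_zero)).tendsto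
  exact hpow.comp h

lemma geDensity_eq_mul_geDensity_half (hα : 0 ≤ α) {v : ℝ} (hv : 0 ≤ v) :
    geDensity α β v = 2 * exp (-(α / 2) * v) * (1 + exp (-(α / 2) * v)) ^ (β - 1) *
      geDensity (α / 2) β v := by
  set s := exp (-(α / 2) * v)
  have hsq : exp (-α * v) = s * s := by rw [← exp_add]; ring_nf
  have hs : s ≤ 1 := exp_le_one_iff.2 (by nlinarith)
  have hfactor : (1 - s * s) ^ (β - 1) = (1 - s) ^ (β - 1) * (1 + s) ^ (β - 1) := by
    rw [← mul_rpow (by linarith) (by positivity)]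
    ring_nf
  rw [geDensity, geDensity, hsq, hfactor]
  ring

lemma pow_mul_exp_neg_le {a : ℝ} (ha : 0 < a) {v : ℝ} (hv : 0 ≤ v) (n : ℕ) :
    v ^ n * exp (-a * v) ≤ n ! * a⁻¹ ^ n := by
  have h : (a * v) ^ n ≤ n ! * exp (a * v) :=
    (div_le_iff₀' (by positivity)).1 (pow_div_factorial_le_exp (x := a * v) (by positivity) n)
  calc v ^ n * exp (-a * v) = a⁻¹ ^ n * ((a * v) ^ n * exp (-(a * v))) := by
        rw [neg_mul, ← mul_assoc, ← mul_pow, ← mul_assoc, inv_mul_cancel₀ ha.ne', one_mul]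
    _ ≤ a⁻¹ ^ n * (n ! * exp (a * v) * exp (-(a * v))) := by gcongr
    _ = n ! * a⁻¹ ^ n := by rw [mul_assoc, ← exp_add, add_neg_cancel, exp_zero]; ring

lemma pow_mul_geDensity_le (hα : 0 < α) (hβ : 0 ≤ β) {v : ℝ} (hv : 0 ≤ v) (n : ℕ) :
    v ^ n * geDensity α β v ≤
      2 * n ! * (α / 2)⁻¹ ^ n * 2 ^ |β - 1| * geDensity (α / 2) β v := by
  set s := exp (-(α / 2) * v)
  have hs : s ≤ 1 := exp_le_one_iff.2 (by nlinarith)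
  have hpow : (1 + s) ^ (β - 1) ≤ 2 ^ |β - 1| :=
    calc (1 + s) ^ (β - 1) ≤ (1 + s) ^ |β - 1| :=
          rpow_le_rpow_of_exponent_le (by linarith [exp_pos (-(α / 2) * v)]) (le_abs_self _)
      _ ≤ 2 ^ |β - 1| := rpow_le_rpow (by positivity) (by linarith) (abs_nonneg _)
  rw [geDensity_eq_mul_geDensity_half hα.le hv]
  calc v ^ n * (2 * s * (1 + s) ^ (β - 1) * geDensity (α / 2) β v)
      = 2 * (v ^ n * s) * (1 + s) ^ (β - 1) * geDensity (α / 2) β v := by ring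
    _ ≤ 2 * (n ! * (α / 2)⁻¹ ^ n) * 2 ^ |β - 1| * geDensity (α / 2) β v := by
      gcongr 2 * ?_ * ?_ * _
      · exact geDensity_nonneg (by positivity) hβ hv
      · exact pow_mul_exp_neg_le (half_pos hα) hv n
    _ = _ := by ring

lemma integrableOn_geDensity_comp_mul_deriv (hα : 0 < α) (hβ : 0 ≤ β)
    {v v' : ℝ → ℝ} {a : ℝ}
    (hcont : ContinuousWithinAt v (Ici a) a) (hderiv : ∀ x ∈ Ioi a, HasDerivAt v (v' x) x)
    (hv' : ∀ x ∈ Ioi a, 0 ≤ v' x) (hpos : ∀ x ∈ Ioi a, 0 < v x)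
    (htop : Tendsto v atTop atTop) :
    IntegrableOn (fun x => geDensity α β (v x) * v' x) (Ioi a) :=
  integrableOn_Ioi_deriv_of_nonneg
    ((continuous_geCDF hβ).continuousAt.comp_continuousWithinAt hcont)
    (fun x hx => (hasDerivAt_geCDF hα (hpos x hx)).comp x (hderiv x hx))
    (fun x hx => mul_nonneg (geDensity_nonneg hα.le hβ (hpos x hx).le) (hv' x hx))
    ((tendsto_geCDF_atTop hα).comp htop)

end GeneralizedExponential

/-- The odds `G / (1 - G)` of the Gompertz cdf `G x = 1 - exp (-(λ / c) (exp (c x) - 1))`. -/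
noncomputable def gompertzOdds (lam c x : ℝ) : ℝ :=
  exp (lam / c * (exp (c * x) - 1)) - 1

noncomputable def gompertzOddsDeriv (lam c x : ℝ) : ℝ :=
  lam * exp (c * x) * exp (lam / c * (exp (c * x) - 1))

section Gompertz

variable {lam c : ℝ}

lemma hasDerivAt_gompertzOdds (hc : c ≠ 0) (x : ℝ) :
    HasDerivAt (gompertzOdds lam c) (gompertzOddsDeriv lam c x) x := by
  refine ((((((hasDerivAt_id x).const_mul c).exp.sub_const 1).const_mul (lam / c)).exp).sub_const
    1).congr_deriv ?_
  simp only [gompertzOddsDeriv, id, mul_one]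
  field_simp

lemma mul_le_gompertzOdds (hlam : 0 ≤ lam) (hc : 0 < c) (x : ℝ) :
    lam * x ≤ gompertzOdds lam c x := by
  have hcx : c * x ≤ exp (c * x) - 1 := by linarith [add_one_le_exp (c * x)]
  calc lam * x = lam / c * (c * x) := by field_simp
    _ ≤ lam / c * (exp (c * x) - 1) := by gcongr
    _ ≤ gompertzOdds lam c x := by
      rw [gompertzOdds]; linarith [add_one_le_exp (lam / c * (exp (c * x) - 1))]

lemma tendsto_gompertzOdds_atTop (hlam : 0 < lam) (hc : 0 < c) :
    Tendsto (gompertzOdds lam c) atTop atTop :=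
  tendsto_atTop_mono (mul_le_gompertzOdds hlam.le hc) (tendsto_id.const_mul_atTop hlam)

lemma gompertzOddsDeriv_nonneg (hlam : 0 ≤ lam) (x : ℝ) : 0 ≤ gompertzOddsDeriv lam c x := by
  unfold gompertzOddsDeriv
  positivity

end Gompertz

lemma ogeG_pdf_eq_geDensity_mul (α lam c β x : ℝ) :
    ogeG_pdf α lam c β x =
      geDensity α β (gompertzOdds lam c x) * gompertzOddsDeriv lam c x := by
  rw [ogeG_pdf, geDensity, gompertzOdds, gompertzOddsDeriv]
  ring

lemma ogeG_pdf_nonneg {α lam c β x : ℝ} (hα : 0 ≤ α) (hlam : 0 ≤ lam) (hc : 0 < c)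
    (hβ : 0 ≤ β) (hx : 0 ≤ x) : 0 ≤ ogeG_pdf α lam c β x := by
  rw [ogeG_pdf_eq_geDensity_mul]
  have hodds := (mul_nonneg hlam hx).trans (mul_le_gompertzOdds hlam hc x)
  exact mul_nonneg (geDensity_nonneg hα hβ hodds) (gompertzOddsDeriv_nonneg hlam x)

lemma pow_mul_ogeG_pdf_le {α lam c β : ℝ} (hα : 0 < α) (hlam : 0 < lam) (hc : 0 < c)
    (hβ : 0 ≤ β) {x : ℝ} (hx : 0 < x) (r : ℕ) :
    x ^ r * ogeG_pdf α lam c β x ≤ 2 * r ! * (α / 2)⁻¹ ^ r * 2 ^ |β - 1| / lam ^ r *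
      (geDensity (α / 2) β (gompertzOdds lam c x) * gompertzOddsDeriv lam c x) := by
  set u := gompertzOdds lam c x
  have hu : lam * x ≤ u := mul_le_gompertzOdds hlam.le hc x
  have hu₀ : 0 ≤ u := (mul_pos hlam hx).le.trans hu
  have hxr : x ^ r ≤ u ^ r / lam ^ r := by
    rw [← div_pow]
    exact pow_le_pow_left₀ hx.le ((le_div_iff₀' hlam).2 hu) r
  have hv' := gompertzOddsDeriv_nonneg (c := c) hlam.le x
  have hge := geDensity_nonneg hα.le hβ hu₀
  rw [ogeG_pdf_eq_geDensity_mul]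
  calc x ^ r * (geDensity α β u * gompertzOddsDeriv lam c x)
      ≤ u ^ r / lam ^ r * (geDensity α β u * gompertzOddsDeriv lam c x) := by gcongr
    _ = (u ^ r * geDensity α β u) * gompertzOddsDeriv lam c x / lam ^ r := by ring
    _ ≤ (2 * r ! * (α / 2)⁻¹ ^ r * 2 ^ |β - 1| * geDensity (α / 2) β u) *
          gompertzOddsDeriv lam c x / lam ^ r := by
      gcongr ?_ * _ / _
      exact pow_mul_geDensity_le hα hβ hu₀ r
    _ = _ := by ring

/-- For every natural number `r`, the `r`-th moment of the OGE-G distribution is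
finite: `x ^ r * f(x)` is integrable on `(0, ∞)`. -/
theorem ogeG_moment_finite (α lam c β : ℝ)
    (hα : 0 < α) (hlam : 0 < lam) (hc : 0 < c) (hβ : 0 < β) (r : ℕ) :
    MeasureTheory.IntegrableOn
      (fun x : ℝ => x ^ r * ogeG_pdf α lam c β x) (Set.Ioi 0) := by
  have hdom := integrableOn_geDensity_comp_mul_deriv (half_pos hα) hβ.le
    (hasDerivAt_gompertzOdds hc.ne' 0).continuousAt.continuousWithinAt
    (fun x _ => hasDerivAt_gompertzOdds hc.ne' x) (fun x _ => gompertzOddsDeriv_nonneg hlam.le x)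
    (fun x hx => (mul_pos hlam hx).trans_le (mul_le_gompertzOdds hlam.le hc x))
    (tendsto_gompertzOdds_atTop hlam hc)
  refine (hdom.const_mul (2 * r ! * (α / 2)⁻¹ ^ r * 2 ^ |β - 1| / lam ^ r)).mono'
    (by unfold ogeG_pdf; fun_prop) <|
    (ae_restrict_iff' measurableSet_Ioi).2 (Eventually.of_forall fun x (hx : 0 < x) => ?_)
  have hpdf := ogeG_pdf_nonneg hα.le hlam.le hc hβ.le hx.le
  rw [Real.norm_of_nonneg (by positivity)]
  exact pow_mul_ogeG_pdf_le hα hlam hc hβ.le hx r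
end

section
/- Let α > 0, λ > 0, c > 0, β > 0, and let n, r be natural numbers with 1 ≤ r ≤ n. Then for every x > 0, the density of the r-th order statistic from a sample of size n from the OGE-G distribution, namely f_{r:n}(x) = (1/B(r, n-r+1)) · F(x; α, λ, c, β)^{r-1} · (1 - F(x; α, λ, c, β))^{n-r} · f(x; α, λ, c, β), equals the finite linear combination Σ_{i=0}^{n-r} ((-1)^i · n! / (i! · (r-1)! · (n-r-i)! · (r+i))) · f(x; α, λ, c, (r+i)β), where B(·, ·) is the beta function; that is, f_{r:n} is a weighted combination of OGE-G densities with shape parameters (r+i)β. -/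
/-- The cumulative distribution function of the OGE-G distribution. -/
noncomputable def ogeG_cdf (α lam c β x : ℝ) : ℝ :=
  (1 - Real.exp (-α * (Real.exp (lam / c * (Real.exp (c * x) - 1)) - 1))) ^ β

/-- The beta function `B(a, b) = Γ(a)Γ(b)/Γ(a+b)`. -/
noncomputable def betaFn (a b : ℝ) : ℝ :=
  Real.Gamma a * Real.Gamma b / Real.Gamma (a + b)


/-!
With `G := ogeG_cdf α lam c 1` and `g := ogeG_pdf α lam c 1`, the OGE-G family is the
exponentiated family `F_β = G ^ β`, `f_β = β g G ^ (β - 1)`. Expanding `(1 - G ^ β) ^ (n - r)`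
binomially turns `F_β ^ (r - 1) (1 - F_β) ^ (n - r) f_β` into a signed sum of the powers
`g G ^ ((r + i) β - 1) = f_{(r + i) β} / ((r + i) β)`, and the constants collapse because
`B(r, n - r + 1) = (r - 1)! (n - r)! / n!`.
-/

open Finset Nat

theorem betaFn_natCast_add_one (a b : ℕ) :
    betaFn ((a : ℝ) + 1) ((b : ℝ) + 1) = (a ! * b ! / (a + b + 1)! : ℝ) := by
  rw [betaFn, show (a + 1 : ℝ) + (b + 1) = ((a + b + 1 : ℕ) : ℝ) + 1 by push_cast; ring,
    Real.Gamma_nat_eq_factorial, Real.Gamma_nat_eq_factorial, Real.Gamma_nat_eq_factorial]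

theorem betaFn_natCast_sub_add_one {n r : ℕ} (hr : 1 ≤ r) (hrn : r ≤ n) :
    betaFn r ((n : ℝ) - r + 1) = ((r - 1)! * (n - r)! / n ! : ℝ) := by
  have h := betaFn_natCast_add_one (r - 1) (n - r)
  rwa [show r - 1 + (n - r) + 1 = n by omega, Nat.cast_sub hr, Nat.cast_sub hrn, Nat.cast_one,
    sub_add_cancel] at h

theorem one_div_betaFn_mul_choose {n r i : ℕ} (hr : 1 ≤ r) (hrn : r ≤ n) (hi : i ≤ n - r) :
    1 / betaFn r ((n : ℝ) - r + 1) * (n - r).choose i =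
      (n ! / (i ! * (r - 1)! * (n - r - i)! * ((r : ℝ) + i))) * ((r : ℝ) + i) := by
  have hri : (r : ℝ) + i ≠ 0 := by positivity
  rw [betaFn_natCast_sub_add_one hr hrn, Nat.cast_choose ℝ hi]
  field_simp

theorem pow_mul_one_sub_pow {R : Type*} [CommRing R] (y : R) (k m : ℕ) :
    y ^ k * (1 - y) ^ m = ∑ i ∈ range (m + 1), (-1) ^ i * m.choose i * y ^ (k + i) := by
  rw [sub_eq_neg_add, add_pow, mul_sum]
  refine sum_congr rfl fun i _ => ?_
  rw [neg_pow, pow_add]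
  ring

theorem exponentiated_order_statistic_density {F f : ℝ → ℝ} {G g : ℝ} (hG : 0 < G)
    (hF : ∀ β, F β = G ^ β) (hf : ∀ β, f β = β * g * G ^ (β - 1)) (β : ℝ) {n r : ℕ}
    (hr : 1 ≤ r) (hrn : r ≤ n) :
    1 / betaFn r ((n : ℝ) - r + 1) * F β ^ (r - 1) * (1 - F β) ^ (n - r) * f β =
      ∑ i ∈ range (n - r + 1),
        ((-1 : ℝ) ^ i * n ! / (i ! * (r - 1)! * (n - r - i)! * ((r : ℝ) + i))) *
          f (((r : ℝ) + i) * β) := by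
  rw [mul_assoc _ (F β ^ _), pow_mul_one_sub_pow, mul_sum, sum_mul]
  refine sum_congr rfl fun i hi => ?_
  have hi : i ≤ n - r := Nat.lt_succ_iff.mp (mem_range.mp hi)
  have hpow : (G ^ β) ^ (r - 1 + i) * G ^ (β - 1) = G ^ (((r : ℝ) + i) * β - 1) := by
    rw [← Real.rpow_natCast, ← Real.rpow_mul hG.le, ← Real.rpow_add hG]
    push_cast [hr]
    ring_nf
  have hcoef := one_div_betaFn_mul_choose hr hrn hi
  rw [hF, hf, hf]
  linear_combination (1 / betaFn r ((n : ℝ) - r + 1) * (-1) ^ i * (n - r).choose i * β * g) * hpow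
    + ((-1) ^ i * β * g * G ^ (((r : ℝ) + i) * β - 1)) * hcoef

theorem ogeG_cdf_eq_rpow (α lam c β x : ℝ) :
    ogeG_cdf α lam c β x = ogeG_cdf α lam c 1 x ^ β := by
  rw [ogeG_cdf, ogeG_cdf, Real.rpow_one]

theorem ogeG_pdf_eq_mul_rpow (α lam c β x : ℝ) :
    ogeG_pdf α lam c β x = β * ogeG_pdf α lam c 1 x * ogeG_cdf α lam c 1 x ^ (β - 1) := by
  rw [ogeG_pdf, ogeG_pdf, ogeG_cdf, sub_self, Real.rpow_zero, Real.rpow_one]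
  ring

theorem ogeG_cdf_one_pos {α lam c x : ℝ} (hα : 0 < α) (hlam : 0 < lam) (hc : 0 < c)
    (hx : 0 < x) : 0 < ogeG_cdf α lam c 1 x := by
  have hcx : 0 < Real.exp (c * x) - 1 := sub_pos.mpr (Real.one_lt_exp_iff.mpr (by positivity))
  have hA : 0 < Real.exp (lam / c * (Real.exp (c * x) - 1)) - 1 :=
    sub_pos.mpr (Real.one_lt_exp_iff.mpr (by positivity))
  rw [ogeG_cdf, Real.rpow_one, sub_pos]
  exact Real.exp_lt_one_iff.mpr (by nlinarith)

theorem ogeG_order_statistic_density_general (α lam c β : ℝ)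
    (hα : 0 < α) (hlam : 0 < lam) (hc : 0 < c)
    (n r : ℕ) (hr : 1 ≤ r) (hrn : r ≤ n) (x : ℝ) (hx : 0 < x) :
    (1 / betaFn (r : ℝ) ((n : ℝ) - r + 1)) *
      (ogeG_cdf α lam c β x) ^ (r - 1) *
      (1 - ogeG_cdf α lam c β x) ^ (n - r) * ogeG_pdf α lam c β x =
    ∑ i ∈ Finset.range (n - r + 1),
      ((-1 : ℝ) ^ i * (Nat.factorial n : ℝ) /
        ((Nat.factorial i : ℝ) * (Nat.factorial (r - 1) : ℝ) *
          (Nat.factorial (n - r - i) : ℝ) * ((r : ℝ) + i))) *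
        ogeG_pdf α lam c (((r : ℝ) + i) * β) x :=
  exponentiated_order_statistic_density (F := fun β => ogeG_cdf α lam c β x)
    (f := fun β => ogeG_pdf α lam c β x) (ogeG_cdf_one_pos hα hlam hc hx)
    (fun β => ogeG_cdf_eq_rpow α lam c β x) (fun β => ogeG_pdf_eq_mul_rpow α lam c β x) β hr hrn

/-- The density of the `r`-th order statistic of a sample of size `n` from the
OGE-G distribution is a finite weighted combination of OGE-G densities with
shape parameters `(r + i) β`. -/
theorem ogeG_order_statistic_density (α lam c β : ℝ)
    (hα : 0 < α) (hlam : 0 < lam) (hc : 0 < c) (hβ : 0 < β)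
    (n r : ℕ) (hr : 1 ≤ r) (hrn : r ≤ n) (x : ℝ) (hx : 0 < x) :
    (1 / betaFn (r : ℝ) ((n : ℝ) - r + 1)) *
      (ogeG_cdf α lam c β x) ^ (r - 1) *
      (1 - ogeG_cdf α lam c β x) ^ (n - r) * ogeG_pdf α lam c β x =
    ∑ i ∈ Finset.range (n - r + 1),
      ((-1 : ℝ) ^ i * (Nat.factorial n : ℝ) /
        ((Nat.factorial i : ℝ) * (Nat.factorial (r - 1) : ℝ) *
          (Nat.factorial (n - r - i) : ℝ) * ((r : ℝ) + i))) *
        ogeG_pdf α lam c (((r : ℝ) + i) * β) x :=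
  ogeG_order_statistic_density_general α lam c β hα hlam hc n r hr hrn x hx
end
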